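/- Let R be the commutative ring ℤ[y₁,y₂,y₃,y₄]/(y₁², y₂², y₃², y₄²). Set Q := y₁y₂y₃y₄, for each l ∈ {1,2,3,4} let t_l be the product of the three variables y_i with i ≠ l, let T := t₁+t₂+t₃+t₄, and let z_l := 4(Q + T) − 4t_l. Then 4Q does not lie in the ℤ-span (in R) of the nine elements 8Q, 8t₁, 8t₂, 8t₃, 8t₄, z₁, z₂, z₃, z₄. (This is the key non-membership 4y₁y₂y₃y₄ ∉ Γ³(X) established via display (5.5) in the proof of Proposition 5.2 of the paper, which shows that CH²(X̄₅)_tors ≅ ℤ/2ℤ for the generic variety of (SL₂)⁵/μ.) -/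

import Mathlib

open MvPolynomial

/-- The ring `R = ℤ[y₁,y₂,y₃,y₄]/(y₁²,y₂²,y₃²,y₄²)`. -/
abbrev Rq : Type :=
  MvPolynomial (Fin 4) ℤ ⧸
    Ideal.span (Set.range fun i : Fin 4 => (X i : MvPolynomial (Fin 4) ℤ) ^ 2)

/-- The class `y_i` in `R`. -/
noncomputable def yy (i : Fin 4) : Rq :=
  Ideal.Quotient.mk _ (X i)

/-- `Q = y₁y₂y₃y₄`. -/
noncomputable def Qel : Rq := yy 0 * yy 1 * yy 2 * yy 3

/-- `t_l`: the product of the three variables `y_i` with `i ≠ l`. -/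
noncomputable def tel (l : Fin 4) : Rq := ∏ i ∈ Finset.univ.erase l, yy i

/-- `T = t₁ + t₂ + t₃ + t₄`. -/
noncomputable def Tel : Rq := ∑ l : Fin 4, tel l

/-- `z_l = 4(Q + T) − 4t_l`. -/
noncomputable def zel (l : Fin 4) : Rq := 4 * (Qel + Tel) - 4 * tel l

/-- Display (5.5) of Proposition 5.2: `4Q` does not lie in the ℤ-span of the nine
elements `8Q, 8t₁, …, 8t₄, z₁, …, z₄`. -/
-- auxiliary
noncomputable def Ispan : Ideal (MvPolynomial (Fin 4) ℤ) :=
  Ideal.span (Set.range fun i : Fin 4 => (X i : MvPolynomial (Fin 4) ℤ) ^ 2)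

noncomputable def mQ : Fin 4 →₀ ℕ := ∑ i : Fin 4, Finsupp.single i 1
noncomputable def mT (l : Fin 4) : Fin 4 →₀ ℕ := ∑ i ∈ Finset.univ.erase l, Finsupp.single i 1

lemma mQ_apply (j : Fin 4) : mQ j = 1 := by
  simp [mQ, Finsupp.finset_sum_apply, Finsupp.single_apply]

lemma mT_apply (l j : Fin 4) : mT l j = if j = l then 0 else 1 := by
  simp only [mT, Finsupp.finset_sum_apply, Finsupp.single_apply]
  rw [Finset.sum_ite_eq' ]
  simp [eq_comm]

noncomputable def fpoly : MvPolynomial (Fin 4) ℤ →ₗ[ℤ] ℤ :=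
  lcoeff ℤ mQ + ∑ l : Fin 4, lcoeff ℤ (mT l)

lemma coeff_sq (m : Fin 4 →₀ ℕ) (i : Fin 4) (hm : m i ≤ 1) (p : MvPolynomial (Fin 4) ℤ) :
    coeff m (p * X i * X i) = 0 := by
  rw [coeff_mul_X']
  split_ifs with h
  · rw [coeff_mul_X']
    rw [if_neg]
    simp only [Finsupp.mem_support_iff, Finsupp.tsub_apply, Finsupp.single_eq_same, ne_eq,
      not_not]
    omega
  · rfl

lemma fpoly_vanish (x : MvPolynomial (Fin 4) ℤ) (hx : x ∈ Ispan) : fpoly x = 0 := by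
  rw [Ispan, Ideal.mem_span_range_iff_exists_fun] at hx
  obtain ⟨c, rfl⟩ := hx
  rw [map_sum]
  refine Finset.sum_eq_zero fun i _ => ?_
  have h : c i * X i ^ 2 = c i * X i * X i := by ring
  rw [h]
  simp only [fpoly, LinearMap.add_apply, LinearMap.sum_apply, lcoeff_apply]
  rw [coeff_sq _ _ (by rw [mQ_apply]) _]
  rw [Finset.sum_eq_zero fun l _ => coeff_sq _ _ (by rw [mT_apply]; split <;> omega) _]
  simp

noncomputable def Fq : Rq →ₗ[ℤ] ℤ :=
  (Submodule.liftQ (Ispan.restrictScalars ℤ) fpoly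
      (fun x hx => fpoly_vanish x hx)) ∘ₗ
    (Submodule.Quotient.restrictScalarsEquiv ℤ Ispan).symm.toLinearMap

lemma Fq_mk (p : MvPolynomial (Fin 4) ℤ) : Fq (Ideal.Quotient.mk Ispan p) = fpoly p := rfl

example : True := trivial

lemma prod_X_monomial (s : Finset (Fin 4)) :
    (∏ i ∈ s, (X i : MvPolynomial (Fin 4) ℤ)) = monomial (∑ i ∈ s, Finsupp.single i 1) 1 := by
  classical
  induction s using Finset.induction with
  | empty => simp
  | insert _ _ h ih =>
      rw [Finset.prod_insert h, Finset.sum_insert h, ih, X, monomial_mul, one_mul]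

lemma Qel_eq : Qel = Ideal.Quotient.mk Ispan (monomial mQ 1) := by
  have : Qel = Ideal.Quotient.mk Ispan (∏ i : Fin 4, X i) := by
    rw [map_prod, Fin.prod_univ_four]; rfl
  rw [this, prod_X_monomial, mQ]

lemma tel_eq (l : Fin 4) : tel l = Ideal.Quotient.mk Ispan (monomial (mT l) 1) := by
  have : tel l = Ideal.Quotient.mk Ispan (∏ i ∈ Finset.univ.erase l, X i) := by
    rw [map_prod]; rfl
  rw [this, prod_X_monomial, mT]

lemma mT_ne_mQ (l : Fin 4) : mT l ≠ mQ := fun h => by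
  have := congrFun (congrArg DFunLike.coe h) l
  rw [mT_apply, mQ_apply, if_pos rfl] at this
  exact one_ne_zero this.symm

lemma mT_eq_iff (k l : Fin 4) : mT k = mT l ↔ k = l := by
  constructor
  · intro h
    by_contra hkl
    have := congrFun (congrArg DFunLike.coe h) k
    rw [mT_apply, mT_apply, if_pos rfl, if_neg hkl] at this
    exact one_ne_zero this.symm
  · rintro rfl; rfl

lemma Fq_Qel : Fq Qel = 1 := by
  rw [Qel_eq, Fq_mk]
  simp only [fpoly, LinearMap.add_apply, LinearMap.sum_apply, lcoeff_apply, coeff_monomial]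
  rw [Finset.sum_eq_zero fun l _ => if_neg (fun h => mT_ne_mQ l h.symm)]
  simp

lemma Fq_tel (l : Fin 4) : Fq (tel l) = 1 := by
  rw [tel_eq, Fq_mk]
  simp only [fpoly, LinearMap.add_apply, LinearMap.sum_apply, lcoeff_apply, coeff_monomial]
  rw [if_neg (mT_ne_mQ l)]
  have hcong : ∀ k : Fin 4, (if mT l = mT k then (1:ℤ) else 0) = if l = k then 1 else 0 := by
    intro k
    by_cases hk : l = k
    · subst hk; simp
    · rw [if_neg fun h => hk ((mT_eq_iff l k).mp h), if_neg hk]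
  rw [Finset.sum_congr rfl fun k _ => hcong k, Finset.sum_ite_eq Finset.univ l (fun _ => (1:ℤ))]
  simp

lemma Fq_Tel : Fq Tel = 4 := by
  rw [Tel, map_sum]
  simp [Fq_tel]

lemma Fq_cast_mul (n : ℤ) (x : Rq) : Fq ((n : Rq) * x) = n * Fq x := by
  rw [← zsmul_eq_mul, map_zsmul, smul_eq_mul]

lemma four_cast : (4 : Rq) = ((4 : ℤ) : Rq) := by norm_cast
lemma eight_cast : (8 : Rq) = ((8 : ℤ) : Rq) := by norm_cast

lemma Fq_zel (l : Fin 4) : Fq (zel l) = 16 := by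
  rw [zel, map_sub, four_cast, Fq_cast_mul, Fq_cast_mul, map_add, Fq_Qel, Fq_Tel, Fq_tel]
  ring


theorem stmt_17 :
    4 * Qel ∉
      Submodule.span ℤ
        ({8 * Qel} ∪ (Set.range fun l : Fin 4 => 8 * tel l) ∪ Set.range zel) := by
  intro h
  have h2 := Submodule.mem_map_of_mem (f := Fq) h
  rw [Submodule.map_span] at h2
  have hle : Fq '' ({8 * Qel} ∪ (Set.range fun l : Fin 4 => 8 * tel l) ∪ Set.range zel) ⊆
      (Submodule.span ℤ {(8:ℤ)} : Submodule ℤ ℤ) := by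
    rintro x ⟨y, hy, rfl⟩
    simp only [Set.mem_union, Set.mem_singleton_iff, Set.mem_range] at hy
    rw [SetLike.mem_coe, Submodule.mem_span_singleton]
    rcases hy with (rfl | ⟨l, rfl⟩) | ⟨l, rfl⟩
    · exact ⟨1, by rw [eight_cast, Fq_cast_mul, Fq_Qel]; norm_num⟩
    · exact ⟨1, by rw [eight_cast, Fq_cast_mul, Fq_tel]; norm_num⟩
    · exact ⟨2, by rw [Fq_zel]; norm_num⟩
  have h3 : Fq (4 * Qel) ∈ Submodule.span ℤ {(8:ℤ)} := Submodule.span_le.mpr hle h2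
  rw [four_cast, Fq_cast_mul, Fq_Qel, Submodule.mem_span_singleton] at h3
  obtain ⟨a, ha⟩ := h3
  simp only [smul_eq_mul] at ha
  omega
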